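/- Minimality of the closed-loop Lyapunov solution: for every V ∈ S, any symmetric matrix Σ ∈ ℝ^{n×n} satisfying Σ ⪰ Iₙ + X̄₁VΣVᵀX̄₁ᵀ also satisfies Σ ⪰ Σ_V; consequently, J(V) = min{ Tr((Q + VᵀŪ₀ᵀRŪ₀V)Σ) : Σ symmetric, Σ ⪰ Iₙ + X̄₁VΣVᵀX̄₁ᵀ }, with the minimum attained at Σ = Σ_V. -/

import Mathlib

open Matrix

noncomputable section

/-- Euclidean norm of a vector. -/
def eNorm {ι : Type*} [Fintype ι] (v : ι → ℝ) : ℝ :=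
  Real.sqrt (∑ i, v i ^ 2)

/-- Frobenius norm of a matrix. -/
def frobNorm {ι κ : Type*} [Fintype ι] [Fintype κ] (A : Matrix ι κ ℝ) : ℝ :=
  Real.sqrt (∑ i, ∑ j, A i j ^ 2)

/-- Spectral (operator 2-) norm of a matrix. -/
def spNorm {ι κ : Type*} [Fintype ι] [Fintype κ] (A : Matrix ι κ ℝ) : ℝ :=
  sSup {r : ℝ | ∃ v : κ → ℝ, eNorm v = 1 ∧ r = eNorm (A.mulVec v)}

/-- Smallest singular value of a matrix `A`, i.e. the square root of the smallest
eigenvalue of `A * Aᵀ`, expressed as `inf_{‖u‖ = 1} ‖Aᵀ u‖`. -/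
def sigMin {ι κ : Type*} [Fintype ι] [Fintype κ] (A : Matrix ι κ ℝ) : ℝ :=
  sInf {r : ℝ | ∃ u : ι → ℝ, eNorm u = 1 ∧ r = eNorm (A.vecMul u)}

/-- `ρ(A) < 1` : the spectral radius of the real square matrix `A` (i.e. the
largest modulus of a complex eigenvalue) is smaller than one. -/
def specLt1 {ι : Type*} [Fintype ι] [DecidableEq ι] (A : Matrix ι ι ℝ) : Prop :=
  spectralRadius ℂ (A.map Complex.ofReal) < 1

/-- Right inverse `M† = Mᵀ (M Mᵀ)⁻¹` of a full-row-rank matrix. -/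
def pinv {ι κ : Type*} [Fintype ι] [Fintype κ] [DecidableEq ι] (A : Matrix ι κ ℝ) :
    Matrix κ ι ℝ :=
  Aᵀ * (A * Aᵀ)⁻¹

/-- Orthogonal projection `Π_A = I - A† A` onto the nullspace of `A`. -/
def projNull {ι κ : Type*} [Fintype ι] [Fintype κ] [DecidableEq ι] [DecidableEq κ]
    (A : Matrix ι κ ℝ) : Matrix κ κ ℝ :=
  1 - pinv A * A

/-- `Σ(M) = ∑_{i≥0} Mⁱ (Mᵀ)ⁱ`, the unique solution of the discrete Lyapunov
equation `Σ = I + M Σ Mᵀ` when `ρ(M) < 1`. -/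
def lyap {k : ℕ} (M : Matrix (Fin k) (Fin k) ℝ) : Matrix (Fin k) (Fin k) ℝ :=
  ∑' i : ℕ, M ^ i * (Mᵀ) ^ i

variable {n m t : ℕ}

/-- Stacked data matrix `D₀ = [U₀; X₀]`. -/
def Dmat (U0 : Matrix (Fin m) (Fin t) ℝ) (X0 : Matrix (Fin n) (Fin t) ℝ) :
    Matrix (Fin m ⊕ Fin n) (Fin t) ℝ :=
  Matrix.fromRows U0 X0

/-- `Ū₀ = (1/t) U₀ D₀ᵀ`. -/
def Ubar (U0 : Matrix (Fin m) (Fin t) ℝ) (X0 : Matrix (Fin n) (Fin t) ℝ) :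
    Matrix (Fin m) (Fin m ⊕ Fin n) ℝ :=
  (t : ℝ)⁻¹ • (U0 * (Dmat U0 X0)ᵀ)

/-- `X̄₀ = (1/t) X₀ D₀ᵀ`. -/
def Xbar0 (U0 : Matrix (Fin m) (Fin t) ℝ) (X0 : Matrix (Fin n) (Fin t) ℝ) :
    Matrix (Fin n) (Fin m ⊕ Fin n) ℝ :=
  (t : ℝ)⁻¹ • (X0 * (Dmat U0 X0)ᵀ)

/-- `X̄₁ = (1/t) X₁ D₀ᵀ`. -/
def Xbar1 (U0 : Matrix (Fin m) (Fin t) ℝ) (X0 X1 : Matrix (Fin n) (Fin t) ℝ) :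
    Matrix (Fin n) (Fin m ⊕ Fin n) ℝ :=
  (t : ℝ)⁻¹ • (X1 * (Dmat U0 X0)ᵀ)

/-- Sample covariance `Φ = (1/t) D₀ D₀ᵀ`. -/
def Phi (U0 : Matrix (Fin m) (Fin t) ℝ) (X0 : Matrix (Fin n) (Fin t) ℝ) :
    Matrix (Fin m ⊕ Fin n) (Fin m ⊕ Fin n) ℝ :=
  (t : ℝ)⁻¹ • (Dmat U0 X0 * (Dmat U0 X0)ᵀ)

/-- The feasible set `S = {V : X̄₀ V = I, ρ(X̄₁ V) < 1}`. -/
def feasSet (U0 : Matrix (Fin m) (Fin t) ℝ) (X0 X1 : Matrix (Fin n) (Fin t) ℝ) :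
    Set (Matrix (Fin m ⊕ Fin n) (Fin n) ℝ) :=
  {V | Xbar0 U0 X0 * V = 1 ∧ specLt1 (Xbar1 U0 X0 X1 * V)}

/-- The closed-loop Lyapunov solution `Σ_V`, i.e. the unique solution of
`Σ_V = I + (X̄₁ V) Σ_V (X̄₁ V)ᵀ` when `V ∈ S`. -/
def SigV (U0 : Matrix (Fin m) (Fin t) ℝ) (X0 X1 : Matrix (Fin n) (Fin t) ℝ)
    (V : Matrix (Fin m ⊕ Fin n) (Fin n) ℝ) : Matrix (Fin n) (Fin n) ℝ :=
  lyap (Xbar1 U0 X0 X1 * V)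

/-- `P_V`, the unique solution of `P = Q + Vᵀ Ū₀ᵀ R Ū₀ V + (X̄₁V)ᵀ P (X̄₁V)`
when `V ∈ S`, given by its convergent series. -/
def PV (U0 : Matrix (Fin m) (Fin t) ℝ) (X0 X1 : Matrix (Fin n) (Fin t) ℝ)
    (Q : Matrix (Fin n) (Fin n) ℝ) (R : Matrix (Fin m) (Fin m) ℝ)
    (V : Matrix (Fin m ⊕ Fin n) (Fin n) ℝ) : Matrix (Fin n) (Fin n) ℝ :=
  ∑' i : ℕ, ((Xbar1 U0 X0 X1 * V)ᵀ) ^ i *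
      (Q + Vᵀ * (Ubar U0 X0)ᵀ * R * Ubar U0 X0 * V) * (Xbar1 U0 X0 X1 * V) ^ i

/-- The covariance-parameterized LQR cost `J(V)`. -/
def Jcost (U0 : Matrix (Fin m) (Fin t) ℝ) (X0 X1 : Matrix (Fin n) (Fin t) ℝ)
    (Q : Matrix (Fin n) (Fin n) ℝ) (R : Matrix (Fin m) (Fin m) ℝ)
    (V : Matrix (Fin m ⊕ Fin n) (Fin n) ℝ) : ℝ :=
  Matrix.trace ((Q + Vᵀ * (Ubar U0 X0)ᵀ * R * Ubar U0 X0 * V) * SigV U0 X0 X1 V)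

/-- `J* = inf_{V ∈ S} J(V)`. -/
def Jstar (U0 : Matrix (Fin m) (Fin t) ℝ) (X0 X1 : Matrix (Fin n) (Fin t) ℝ)
    (Q : Matrix (Fin n) (Fin n) ℝ) (R : Matrix (Fin m) (Fin m) ℝ) : ℝ :=
  sInf (Jcost U0 X0 X1 Q R '' feasSet U0 X0 X1)

/-- Sublevel set `S(a) = {V ∈ S : J(V) ≤ a}`. -/
def subLevel (U0 : Matrix (Fin m) (Fin t) ℝ) (X0 X1 : Matrix (Fin n) (Fin t) ℝ)
    (Q : Matrix (Fin n) (Fin n) ℝ) (R : Matrix (Fin m) (Fin m) ℝ) (a : ℝ) :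
    Set (Matrix (Fin m ⊕ Fin n) (Fin n) ℝ) :=
  {V | V ∈ feasSet U0 X0 X1 ∧ Jcost U0 X0 X1 Q R V ≤ a}

/-- The gradient `∇J(V) = 2 (Ū₀ᵀ R Ū₀ + X̄₁ᵀ P_V X̄₁) V Σ_V`. -/
def gradJ (U0 : Matrix (Fin m) (Fin t) ℝ) (X0 X1 : Matrix (Fin n) (Fin t) ℝ)
    (Q : Matrix (Fin n) (Fin n) ℝ) (R : Matrix (Fin m) (Fin m) ℝ)
    (V : Matrix (Fin m ⊕ Fin n) (Fin n) ℝ) : Matrix (Fin m ⊕ Fin n) (Fin n) ℝ :=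
  (2 : ℝ) • (((Ubar U0 X0)ᵀ * R * Ubar U0 X0 +
      (Xbar1 U0 X0 X1)ᵀ * PV U0 X0 X1 Q R V * Xbar1 U0 X0 X1) * V * SigV U0 X0 X1 V)

/-- `ξ(a) = ‖Ū₀‖² ‖R‖ + ‖X̄₁‖² a`. -/
def xiC (U0 : Matrix (Fin m) (Fin t) ℝ) (X0 X1 : Matrix (Fin n) (Fin t) ℝ)
    (R : Matrix (Fin m) (Fin m) ℝ) (a : ℝ) : ℝ :=
  spNorm (Ubar U0 X0) ^ 2 * spNorm R + spNorm (Xbar1 U0 X0 X1) ^ 2 * a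

/-- Smoothness constant `l(a)`. -/
def lC (U0 : Matrix (Fin m) (Fin t) ℝ) (X0 X1 : Matrix (Fin n) (Fin t) ℝ)
    (Q : Matrix (Fin n) (Fin n) ℝ) (R : Matrix (Fin m) (Fin m) ℝ) (a : ℝ) : ℝ :=
  4 * a ^ 2 * (xiC U0 X0 X1 R a + a - sigMin Q) * frobNorm (Xbar1 U0 X0 X1) ^ 2 / sigMin Q ^ 2 +
    2 * xiC U0 X0 X1 R a * a / sigMin Q

/-- Gradient-dominance constant `μ(a) = 4a²/(σ̲(Q)^{3/2} σ̲(R)^{1/2} σ̲(Ū₀))`. -/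
def muC (U0 : Matrix (Fin m) (Fin t) ℝ) (X0 : Matrix (Fin n) (Fin t) ℝ)
    (Q : Matrix (Fin n) (Fin n) ℝ) (R : Matrix (Fin m) (Fin m) ℝ) (a : ℝ) : ℝ :=
  4 * a ^ 2 / (Real.sqrt (sigMin Q) ^ 3 * Real.sqrt (sigMin R) * sigMin (Ubar U0 X0))

/-- Reparameterized cost `f(L, Σ) = Tr(QΣ) + Tr(L Σ⁻¹ Lᵀ Ū₀ᵀ R Ū₀)`. -/
def fRep (U0 : Matrix (Fin m) (Fin t) ℝ) (X0 : Matrix (Fin n) (Fin t) ℝ)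
    (Q : Matrix (Fin n) (Fin n) ℝ) (R : Matrix (Fin m) (Fin m) ℝ)
    (L : Matrix (Fin m ⊕ Fin n) (Fin n) ℝ) (Sg : Matrix (Fin n) (Fin n) ℝ) : ℝ :=
  Matrix.trace (Q * Sg) + Matrix.trace (L * Sg⁻¹ * Lᵀ * (Ubar U0 X0)ᵀ * R * Ubar U0 X0)

/-- Feasible set `ℒ` of the convex reparameterization. -/
def repSet (U0 : Matrix (Fin m) (Fin t) ℝ) (X0 X1 : Matrix (Fin n) (Fin t) ℝ) :
    Set (Matrix (Fin m ⊕ Fin n) (Fin n) ℝ × Matrix (Fin n) (Fin n) ℝ) :=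
  {p | p.2.IsSymm ∧ p.2 = Xbar0 U0 X0 * p.1 ∧
    (Matrix.fromBlocks (p.2 - 1) (Xbar1 U0 X0 X1 * p.1)
      ((Xbar1 U0 X0 X1 * p.1)ᵀ) p.2).PosSemidef}

/-- `p(a) = (16a³/(σ̲(Q)²ζ)) (1 + a/σ̲(Q)) (1 + √(a/σ̲(R)))`. -/
def pC (Q : Matrix (Fin n) (Fin n) ℝ) (R : Matrix (Fin m) (Fin m) ℝ) (ζ a : ℝ) : ℝ :=
  16 * a ^ 3 / (sigMin Q ^ 2 * ζ) * (1 + a / sigMin Q) * (1 + Real.sqrt (a / sigMin R))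

/-!
Write `A = X̄₁V` and `D = Σ - Σ_V`. The fixed-point equation `Σ_V = I + A Σ_V Aᵀ` turns the
hypothesis into the Stein inequality `D - A D Aᵀ ⪰ 0`, and telescoping gives
`D - Aᵖ D (Aᵀ)ᵖ = ∑_{i<p} Aⁱ (D - A D Aᵀ) (Aᵀ)ⁱ ⪰ 0`. Since `ρ(A) < 1`, Gelfand's formula makes
`Aᵖ` decay geometrically, so letting `p → ∞` gives `D ⪰ 0`. The weight
`W = Q + VᵀŪ₀ᵀRŪ₀V` is positive semidefinite, hence `Tr(W Σ) - Tr(W Σ_V) = Tr(W D) ≥ 0`, and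
`Σ_V` itself satisfies the constraint with equality.
-/

open Filter Topology
open scoped NNReal ENNReal

theorem eventually_norm_pow_le_of_spectralRadius_lt {A : Type*} [NormedRing A]
    [NormedAlgebra ℂ A] [CompleteSpace A] {a : A} {r : ℝ≥0} (h : spectralRadius ℂ a < r) :
    ∀ᶠ p : ℕ in atTop, ‖a ^ p‖ ≤ r ^ p := by
  have hgelfand := spectrum.pow_nnnorm_pow_one_div_tendsto_nhds_spectralRadius a
  filter_upwards [hgelfand.eventually_lt_const h, eventually_gt_atTop 0] with p hp hp0
  have hp' := ENNReal.rpow_lt_rpow hp (by positivity : (0 : ℝ) < p)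
  rw [← ENNReal.rpow_mul, one_div_mul_cancel (by positivity), ENNReal.rpow_one,
    ENNReal.rpow_natCast, ← ENNReal.coe_pow, ENNReal.coe_lt_coe] at hp'
  exact_mod_cast hp'.le

section Stein

variable {𝕜 ι : Type*} [RCLike 𝕜] [Fintype ι]

open scoped ComplexOrder

theorem Matrix.isClosed_setOf_posSemidef : IsClosed {D : Matrix ι ι 𝕜 | D.PosSemidef} := by
  simp only [Matrix.posSemidef_iff_dotProduct_mulVec, Set.ofPred_and, Set.ofPred_forall]
  refine (isClosed_eq continuous_id.matrix_conjTranspose continuous_id).inter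
    (isClosed_iInter fun x => isClosed_le continuous_const ?_)
  fun_prop

theorem Matrix.PosSemidef.trace_mul_nonneg {A B : Matrix ι ι 𝕜} (hA : A.PosSemidef)
    (hB : B.PosSemidef) : 0 ≤ (A * B).trace := by
  classical
  open scoped MatrixOrder in
  obtain ⟨C, rfl⟩ := CStarAlgebra.nonneg_iff_eq_star_mul_self.mp hA.nonneg
  rw [Matrix.mul_assoc, Matrix.trace_mul_comm]
  exact (hB.mul_mul_conjTranspose_same C).trace_nonneg

variable [DecidableEq ι]

theorem Matrix.sub_pow_mul_mul_conjTranspose_pow (A D : Matrix ι ι 𝕜) (p : ℕ) :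
    D - A ^ p * D * (A ^ p)ᴴ = ∑ i ∈ Finset.range p, A ^ i * (D - A * D * Aᴴ) * (A ^ i)ᴴ := by
  induction p with
  | zero => simp
  | succ p ih =>
    rw [Finset.sum_range_succ, ← ih, pow_succ, Matrix.conjTranspose_mul]
    simp only [Matrix.mul_sub, Matrix.sub_mul, Matrix.mul_assoc]
    abel

theorem Matrix.PosSemidef.of_sub_mul_mul_conjTranspose {A D : Matrix ι ι 𝕜}
    (hA : Tendsto (A ^ ·) atTop (𝓝 0)) (hD : (D - A * D * Aᴴ).PosSemidef) : D.PosSemidef := by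
  have hlim : Tendsto (fun p => D - A ^ p * D * (A ^ p)ᴴ) atTop (𝓝 D) := by
    have hcont : Continuous fun X : Matrix ι ι 𝕜 => D - X * D * Xᴴ := by fun_prop
    simpa only [Function.comp_def, zero_mul, sub_zero] using (hcont.tendsto 0).comp hA
  refine Matrix.isClosed_setOf_posSemidef.mem_of_tendsto hlim (Eventually.of_forall fun p => ?_)
  rw [Set.mem_ofPred_eq, Matrix.sub_pow_mul_mul_conjTranspose_pow]
  exact Matrix.posSemidef_sum _ fun i _ => hD.mul_mul_conjTranspose_same _

end Stein

section SpecLt1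

-- The Frobenius norm is submultiplicative and invariant under transposition.
open scoped Matrix.Norms.Frobenius

variable {ι : Type*} [Fintype ι] [DecidableEq ι] {A : Matrix ι ι ℝ}

theorem specLt1.exists_eventually_norm_pow_le (hA : specLt1 A) :
    ∃ r : ℝ, 0 ≤ r ∧ r < 1 ∧ ∀ᶠ p : ℕ in atTop, ‖A ^ p‖ ≤ r ^ p := by
  obtain ⟨r, hAr, hr1⟩ := ENNReal.lt_iff_exists_nnreal_btwn.mp hA
  refine ⟨r, r.coe_nonneg, by exact_mod_cast hr1, ?_⟩
  filter_upwards [eventually_norm_pow_le_of_spectralRadius_lt hAr] with p hp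
  have hmap : A.map Complex.ofReal ^ p = (A ^ p).map Complex.ofReal :=
    (Complex.ofRealHom.mapMatrix.map_pow A p).symm
  rwa [hmap, Matrix.frobenius_norm_map_eq _ _ Complex.norm_real] at hp

theorem specLt1.tendsto_pow_atTop_nhds_zero (hA : specLt1 A) :
    Tendsto (A ^ ·) atTop (𝓝 0) := by
  obtain ⟨r, hr0, hr1, hpow⟩ := hA.exists_eventually_norm_pow_le
  exact squeeze_zero_norm' hpow (tendsto_pow_atTop_nhds_zero_of_lt_one hr0 hr1)

theorem specLt1.summable_pow_mul_transpose_pow (hA : specLt1 A) :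
    Summable fun p : ℕ => A ^ p * Aᵀ ^ p := by
  obtain ⟨r, hr0, hr1, hpow⟩ := hA.exists_eventually_norm_pow_le
  refine .of_norm_bounded_eventually_nat
    (summable_geometric_of_lt_one (sq_nonneg r) (by nlinarith)) ?_
  filter_upwards [hpow] with p hp
  calc ‖A ^ p * Aᵀ ^ p‖ ≤ ‖A ^ p‖ * ‖(A ^ p)ᵀ‖ := by
        rw [Matrix.transpose_pow]; exact norm_mul_le _ _
    _ = ‖A ^ p‖ ^ 2 := by rw [Matrix.frobenius_norm_transpose, sq]
    _ ≤ (r ^ p) ^ 2 := pow_le_pow_left₀ (norm_nonneg _) hp 2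
    _ = (r ^ 2) ^ p := by ring

end SpecLt1

section Lyapunov

variable {k : ℕ}

theorem lyap_isSymm (M : Matrix (Fin k) (Fin k) ℝ) : (lyap M).IsSymm := by
  simp only [Matrix.IsSymm, lyap, Matrix.transpose_tsum, Matrix.transpose_mul,
    Matrix.transpose_pow, Matrix.transpose_transpose]

theorem lyap_eq_one_add {M : Matrix (Fin k) (Fin k) ℝ} (hM : specLt1 M) :
    lyap M = 1 + M * lyap M * Mᵀ := by
  have hs := hM.summable_pow_mul_transpose_pow
  have hshift : ∀ p : ℕ, M ^ (p + 1) * Mᵀ ^ (p + 1) = M * (M ^ p * Mᵀ ^ p) * Mᵀ := fun p => by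
    rw [pow_succ', pow_succ]; simp only [Matrix.mul_assoc]
  calc lyap M = M ^ 0 * Mᵀ ^ 0 + ∑' p : ℕ, M ^ (p + 1) * Mᵀ ^ (p + 1) := hs.tsum_eq_zero_add
    _ = 1 + M * lyap M * Mᵀ := by
      simp only [hshift, pow_zero, Matrix.one_mul]
      rw [(hs.mul_left M).tsum_mul_right, hs.tsum_mul_left, lyap]

theorem sub_lyap_posSemidef {A Sg : Matrix (Fin k) (Fin k) ℝ} (hA : specLt1 A)
    (h : (Sg - (1 + A * Sg * Aᵀ)).PosSemidef) : (Sg - lyap A).PosSemidef := by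
  have hstein : Sg - lyap A - A * (Sg - lyap A) * Aᴴ = Sg - (1 + A * Sg * Aᵀ) := by
    rw [Matrix.conjTranspose_eq_transpose_of_trivial, Matrix.mul_sub, Matrix.sub_mul]
    nth_rewrite 1 [lyap_eq_one_add hA]
    abel
  exact .of_sub_mul_mul_conjTranspose hA.tendsto_pow_atTop_nhds_zero (hstein ▸ h)

theorem isLeast_trace_mul_lyap {A W : Matrix (Fin k) (Fin k) ℝ} (hA : specLt1 A)
    (hW : W.PosSemidef) :
    IsLeast {r : ℝ | ∃ Sg : Matrix (Fin k) (Fin k) ℝ, Sg.IsSymm ∧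
      (Sg - (1 + A * Sg * Aᵀ)).PosSemidef ∧ r = (W * Sg).trace} (W * lyap A).trace := by
  refine ⟨⟨lyap A, lyap_isSymm A, ?_, rfl⟩, ?_⟩
  · rw [← lyap_eq_one_add hA, sub_self]
    exact .zero
  · rintro r ⟨Sg, -, hSg, rfl⟩
    have htrace := hW.trace_mul_nonneg (sub_lyap_posSemidef hA hSg)
    rwa [Matrix.mul_sub, Matrix.trace_sub, sub_nonneg] at htrace

end Lyapunov

theorem stmt_19_general {n m t : ℕ}
    (U0 : Matrix (Fin m) (Fin t) ℝ) (X0 X1 : Matrix (Fin n) (Fin t) ℝ)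
    (Q : Matrix (Fin n) (Fin n) ℝ) (R : Matrix (Fin m) (Fin m) ℝ)
    (hQ : Q.PosDef) (hR : R.PosDef) :
    ∀ V ∈ feasSet U0 X0 X1,
      (∀ Sg : Matrix (Fin n) (Fin n) ℝ, Sg.IsSymm →
        (Sg - (1 + Xbar1 U0 X0 X1 * V * Sg * Vᵀ * (Xbar1 U0 X0 X1)ᵀ)).PosSemidef →
        (Sg - SigV U0 X0 X1 V).PosSemidef) ∧
      IsLeast {r : ℝ | ∃ Sg : Matrix (Fin n) (Fin n) ℝ, Sg.IsSymm ∧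
          (Sg - (1 + Xbar1 U0 X0 X1 * V * Sg * Vᵀ * (Xbar1 U0 X0 X1)ᵀ)).PosSemidef ∧
          r = Matrix.trace ((Q + Vᵀ * (Ubar U0 X0)ᵀ * R * Ubar U0 X0 * V) * Sg)}
        (Jcost U0 X0 X1 Q R V) := by
  rintro V ⟨-, hstable⟩
  have hconj : ∀ Sg : Matrix (Fin n) (Fin n) ℝ,
      Xbar1 U0 X0 X1 * V * Sg * Vᵀ * (Xbar1 U0 X0 X1)ᵀ =
        (Xbar1 U0 X0 X1 * V) * Sg * (Xbar1 U0 X0 X1 * V)ᵀ := fun Sg => by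
    simp only [Matrix.transpose_mul, Matrix.mul_assoc]
  have hW : (Q + Vᵀ * (Ubar U0 X0)ᵀ * R * Ubar U0 X0 * V).PosSemidef := by
    refine hQ.posSemidef.add ?_
    simpa only [Matrix.conjTranspose_eq_transpose_of_trivial, Matrix.transpose_mul,
      Matrix.mul_assoc] using hR.posSemidef.conjTranspose_mul_mul_same (Ubar U0 X0 * V)
  simp only [hconj]
  exact ⟨fun Sg _ => sub_lyap_posSemidef hstable, isLeast_trace_mul_lyap hstable hW⟩

/-- Minimality of the closed-loop Lyapunov solution: any symmetric `Σ` with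
`Σ ⪰ I + X̄₁VΣVᵀX̄₁ᵀ` dominates `Σ_V`, and `J(V)` is the least value of the
relaxed problem, attained at `Σ_V`. -/
theorem stmt_19 {n m t : ℕ} (hn : 0 < n) (hm : 0 < m) (ht : 0 < t)
    (U0 : Matrix (Fin m) (Fin t) ℝ) (X0 X1 : Matrix (Fin n) (Fin t) ℝ)
    (Q : Matrix (Fin n) (Fin n) ℝ) (R : Matrix (Fin m) (Fin m) ℝ)
    (hQ : Q.PosDef) (hR : R.PosDef)
    (hrank : (Dmat U0 X0).rank = m + n) :
    ∀ V ∈ feasSet U0 X0 X1,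
      (∀ Sg : Matrix (Fin n) (Fin n) ℝ, Sg.IsSymm →
        (Sg - (1 + Xbar1 U0 X0 X1 * V * Sg * Vᵀ * (Xbar1 U0 X0 X1)ᵀ)).PosSemidef →
        (Sg - SigV U0 X0 X1 V).PosSemidef) ∧
      IsLeast {r : ℝ | ∃ Sg : Matrix (Fin n) (Fin n) ℝ, Sg.IsSymm ∧
          (Sg - (1 + Xbar1 U0 X0 X1 * V * Sg * Vᵀ * (Xbar1 U0 X0 X1)ᵀ)).PosSemidef ∧
          r = Matrix.trace ((Q + Vᵀ * (Ubar U0 X0)ᵀ * R * Ubar U0 X0 * V) * Sg)}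
        (Jcost U0 X0 X1 Q R V) :=
  stmt_19_general U0 X0 X1 Q R hQ hR
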